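/- For fixed q ∈ (0,1/2) and integers R, L ≥ 1, let p₀ = p₀(q,R,L) be the unique point in (1/2,1) with α(p₀,q,R,L) = 1/2. Then q + p₀ < 1 if R < L, and q + p₀ > 1 if R > L. -/

import Mathlib

/-!
Clearing the denominator of `alpha`, the equation `alpha p = 1/2` says that
`G p := (p - 1/2)(1 - q) q^R (1 - (1 - p)^L) - (1/2 - q)(1 - q^R) p (1 - p)^L` vanishes.
On `[1/2, 1]` the first term is strictly increasing and `p (1 - p)^L` is decreasing, so `G` is
strictly increasing there and `p₀` is its only zero. Since
`G (1 - q) = (1/2 - q)(1 - q)(q^R - q^L)`, the point `1 - q` lies to the right of `p₀`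
when `R < L` and to its left when `L < R`.
-/

noncomputable def alpha (p q : ℝ) (R L : ℕ) : ℝ :=
  (p * ((1-q) * q^R * (1 - (1-p)^L)) + q * (p * (1-p)^L * (1 - q^R))) /
    ((1-q) * q^R * (1 - (1-p)^L) + p * (1-p)^L * (1 - q^R))

open Set

noncomputable def alphaGap (p q : ℝ) (R L : ℕ) : ℝ :=
  (p - 1/2) * ((1 - q) * q ^ R) * (1 - (1 - p) ^ L) - (1/2 - q) * (1 - q ^ R) * (p * (1 - p) ^ L)

lemma alphaGap_eq_zero_of_alpha_eq_half {p q : ℝ} {R L : ℕ} (h : alpha p q R L = 1/2) :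
    alphaGap p q R L = 0 := by
  have hden : (1 - q) * q ^ R * (1 - (1 - p) ^ L) + p * (1 - p) ^ L * (1 - q ^ R) ≠ 0 := by
    intro h0
    rw [alpha, h0, div_zero] at h
    norm_num at h
  rw [alpha, div_eq_iff hden] at h
  unfold alphaGap
  linear_combination h

lemma alphaGap_one_sub (q : ℝ) (R L : ℕ) :
    alphaGap (1 - q) q R L = (1/2 - q) * (1 - q) * (q ^ R - q ^ L) := by
  unfold alphaGap
  ring

lemma strictMonoOn_sub_half_mul_one_sub_pow {L : ℕ} (hL : 0 < L) :
    StrictMonoOn (fun p : ℝ => (p - 1/2) * (1 - (1 - p) ^ L)) (Icc (1/2) 1) := by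
  rintro a ⟨ha, -⟩ b ⟨-, hb⟩ hab
  have hpow : (1 - b) ^ L ≤ (1 - a) ^ L := pow_le_pow_left₀ (by linarith) (by linarith) L
  have hpow_lt : (1 - b) ^ L < 1 := pow_lt_one₀ (by linarith) (by linarith) hL.ne'
  calc (a - 1/2) * (1 - (1 - a) ^ L)
      ≤ (a - 1/2) * (1 - (1 - b) ^ L) := by gcongr
    _ < (b - 1/2) * (1 - (1 - b) ^ L) := by gcongr

lemma antitoneOn_mul_one_sub_pow {L : ℕ} (hL : 0 < L) :
    AntitoneOn (fun p : ℝ => p * (1 - p) ^ L) (Icc (1/2) 1) := by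
  obtain ⟨M, rfl⟩ := Nat.exists_eq_add_one_of_ne_zero hL.ne'
  rintro a ⟨ha, -⟩ b ⟨-, hb⟩ hab
  have hquad : b * (1 - b) ≤ a * (1 - a) := by nlinarith
  calc b * (1 - b) ^ (M + 1) = b * (1 - b) * (1 - b) ^ M := by ring
    _ ≤ a * (1 - a) * (1 - a) ^ M := by
      gcongr
      nlinarith
    _ = a * (1 - a) ^ (M + 1) := by ring

lemma strictMonoOn_alphaGap {q : ℝ} (R : ℕ) {L : ℕ} (hq₀ : 0 < q) (hq : q ≤ 1/2) (hL : 0 < L) :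
    StrictMonoOn (fun p => alphaGap p q R L) (Icc (1/2) 1) := by
  intro a ha b hb hab
  have hfirst := strictMonoOn_sub_half_mul_one_sub_pow hL ha hb hab
  have hsecond := antitoneOn_mul_one_sub_pow hL ha hb hab.le
  have hK : 0 < (1 - q) * q ^ R := mul_pos (by linarith) (pow_pos hq₀ R)
  have hc : 0 ≤ (1/2 - q) * (1 - q ^ R) :=
    mul_nonneg (by linarith) (sub_nonneg.2 (pow_le_one₀ hq₀.le (by linarith)))
  simp only [alphaGap] at hfirst hsecond ⊢
  nlinarith [mul_lt_mul_of_pos_left hfirst hK, mul_le_mul_of_nonneg_left hsecond hc]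

theorem stmt2_general (q p₀ : ℝ) (R L : ℕ) (hq : q ∈ Set.Ioo (0:ℝ) (1/2))
    (hL : 1 ≤ L)
    (hp₀ : p₀ ∈ Set.Ioo (1/2 : ℝ) 1) (hcrit : alpha p₀ q R L = 1/2) :
    (R < L → q + p₀ < 1) ∧ (L < R → 1 < q + p₀) := by
  obtain ⟨hq₀, hq⟩ := hq
  have hgap : alphaGap p₀ q R L = 0 := alphaGap_eq_zero_of_alpha_eq_half hcrit
  have hmono := strictMonoOn_alphaGap R hq₀ hq.le hL
  have hp₀' : p₀ ∈ Icc (1/2) 1 := Ioo_subset_Icc_self hp₀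
  have hq' : 1 - q ∈ Icc (1/2) 1 := ⟨by linarith, by linarith⟩
  have hcoef : 0 < (1/2 - q) * (1 - q) := mul_pos (by linarith) (by linarith)
  refine ⟨fun hRL => ?_, fun hLR => ?_⟩
  · have hlt : alphaGap p₀ q R L < alphaGap (1 - q) q R L := by
      rw [hgap, alphaGap_one_sub]
      exact mul_pos hcoef (sub_pos.2 (pow_lt_pow_right_of_lt_one₀ hq₀ (by linarith) hRL))
    linarith [(hmono.lt_iff_lt hp₀' hq').1 hlt]
  · have hlt : alphaGap (1 - q) q R L < alphaGap p₀ q R L := by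
      rw [hgap, alphaGap_one_sub]
      exact mul_neg_of_pos_of_neg hcoef
        (sub_neg.2 (pow_lt_pow_right_of_lt_one₀ hq₀ (by linarith) hLR))
    linarith [(hmono.lt_iff_lt hq' hp₀').1 hlt]

theorem stmt2 (q p₀ : ℝ) (R L : ℕ) (hq : q ∈ Set.Ioo (0:ℝ) (1/2))
    (hR : 1 ≤ R) (hL : 1 ≤ L)
    (hp₀ : p₀ ∈ Set.Ioo (1/2 : ℝ) 1) (hcrit : alpha p₀ q R L = 1/2) :
    (R < L → q + p₀ < 1) ∧ (L < R → 1 < q + p₀) :=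
  stmt2_general q p₀ R L hq hL hp₀ hcrit
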